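/- Let ℓ and ℓ' be nonnegative integers. Then the (ℓ+ℓ'+1)-tuple ( 1/(ℓ+1), 2/(ℓ+1), ..., ℓ/(ℓ+1), 1/(ℓ'+1), 2/(ℓ'+1), ..., ℓ'/(ℓ'+1), 1/2 ) belongs to (1/(ℓ+ℓ'+2)) · 𝒜_{ℓ+ℓ'+1}; equivalently, (ℓ+ℓ'+2) times this tuple lies in the convex hull of the permutations of (1, 2, ..., ℓ+ℓ'+1). -/

import Mathlib

/-!
Let `f : Fin n → β` sort the coordinates into classes. If `i` is the `k`-th smallest element of
its class and that class has `s` elements, `orderStatMean f i = (n+1)k/(s+1)` is the expected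
`k`-th smallest element of a uniformly random `s`-subset of `{1, …, n}`. Such a vector lies in the
permutohedron for every `f`, by induction on `n`: it is the average over all coordinates `i` of the
vectors obtained by deleting the last element of the class of `i`, taking the vector of the
restricted labelling, and putting the maximal value back at the deleted place. The theorem is
the case of the three classes formed by the first `ℓ`, the next `ℓ'` and the last coordinate.
-/

/-- `𝒜_r`: the convex hull in ℝ^r of the set of all permutations of the vector (1, 2, ..., r). -/
def permsHull (r : ℕ) : Set (Fin r → ℝ) :=
  convexHull ℝ {v : Fin r → ℝ | ∃ σ : Equiv.Perm (Fin r), v = fun i => ((σ i : ℕ) : ℝ) + 1}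

open Finset

theorem insertNth_mem_permsHull {n : ℕ} (p : Fin (n + 1)) {x : Fin n → ℝ}
    (hx : x ∈ permsHull n) : p.insertNth ((n : ℝ) + 1) x ∈ permsHull (n + 1) := by
  have hconv : Convex ℝ {x : Fin n → ℝ | p.insertNth ((n : ℝ) + 1) x ∈ permsHull (n + 1)} := by
    intro y hy z hz a b ha hb hab
    have hlin : p.insertNth ((n : ℝ) + 1) (a • y + b • z)
        = a • p.insertNth ((n : ℝ) + 1) y + b • p.insertNth ((n : ℝ) + 1) z := by
      ext j
      obtain rfl | ⟨k, rfl⟩ := p.eq_self_or_eq_succAbove j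
      · simp [← add_mul, hab]
      · simp
    change _ ∈ permsHull (n + 1)
    rw [hlin]
    exact convex_convexHull ℝ _ hy hz ha hb hab
  refine convexHull_min ?_ hconv hx
  rintro _ ⟨σ, rfl⟩
  refine subset_convexHull ℝ _
    ⟨(finSuccEquiv' p).trans ((Equiv.optionCongr σ).trans finSuccEquivLast.symm), ?_⟩
  ext j
  obtain rfl | ⟨k, rfl⟩ := p.eq_self_or_eq_succAbove j
  · simp
  · simp

theorem card_filter_fin_le_val_lt {n a b : ℕ} (hb : b ≤ n) :
    #{j : Fin n | a ≤ (j : ℕ) ∧ (j : ℕ) < b} = b - a := by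
  rw [← Nat.card_Ico]
  exact card_nbij Fin.val (fun j hj => by simpa using hj) Fin.val_injective.injOn
    (fun m hm => ⟨⟨m, (mem_Ico.1 hm).2.trans_le hb⟩, by simpa using hm, rfl⟩)

section

variable {β : Type*} [DecidableEq β] {n : ℕ}

def classCard (f : Fin n → β) (i : Fin n) : ℕ := #{j | f j = f i}

def classRank (f : Fin n → β) (i : Fin n) : ℕ := #{j | j ≤ i ∧ f j = f i}

noncomputable def orderStatMean (f : Fin n → β) (i : Fin n) : ℝ :=
  ((n : ℝ) + 1) * classRank f i / (classCard f i + 1)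

def lastOfClass (f : Fin n → β) (i : Fin n) : Fin n :=
  ({j | f j = f i} : Finset (Fin n)).max' ⟨i, by simp⟩

theorem apply_lastOfClass (f : Fin n → β) (i : Fin n) : f (lastOfClass f i) = f i :=
  (mem_filter.1 (max'_mem ({j | f j = f i} : Finset (Fin n)) _)).2

theorem le_lastOfClass {f : Fin n → β} {i j : Fin n} (h : f j = f i) : j ≤ lastOfClass f i :=
  le_max' _ j (by simpa using h)

theorem classCard_pos (f : Fin n → β) (i : Fin n) : 0 < classCard f i :=
  card_pos.2 ⟨i, by simp⟩

theorem classRank_eq_classCard {f : Fin n → β} {i : Fin n} (hi : ∀ j, f j = f i → j ≤ i) :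
    classRank f i = classCard f i := by
  unfold classRank classCard
  congr 1
  ext j
  simp only [mem_filter, mem_univ, true_and, and_iff_right_iff_imp]
  exact hi j

theorem classCard_comp_succAbove (f : Fin (n + 1) → β) (p : Fin (n + 1)) (j : Fin n) :
    classCard (f ∘ p.succAbove) j + (if f p = f (p.succAbove j) then 1 else 0)
      = classCard f (p.succAbove j) := by
  simp only [classCard, card_filter, Fin.sum_univ_succAbove _ p, Function.comp_apply]
  ring

theorem classRank_comp_succAbove {f : Fin (n + 1) → β} {p : Fin (n + 1)}
    (hp : ∀ j, f j = f p → j ≤ p) (j : Fin n) :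
    classRank (f ∘ p.succAbove) j = classRank f (p.succAbove j) := by
  simp only [classRank, card_filter, Fin.sum_univ_succAbove _ p, Function.comp_apply,
    Fin.succAbove_le_succAbove_iff]
  rw [if_neg, zero_add]
  rintro ⟨hle, heq⟩
  exact Fin.succAbove_ne p j (le_antisymm (hp _ heq.symm) hle)

noncomputable def orderStatMeanReinsert (f : Fin (n + 1) → β) (i : Fin (n + 1)) :
    Fin (n + 1) → ℝ :=
  (lastOfClass f i).insertNth ((n : ℝ) + 1) (orderStatMean (f ∘ (lastOfClass f i).succAbove))

theorem orderStatMeanReinsert_apply (f : Fin (n + 1) → β) (i x : Fin (n + 1)) :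
    orderStatMeanReinsert f i x
      = if f i = f x then ((n : ℝ) + 1) * classRank f x / classCard f x
        else ((n : ℝ) + 1) * classRank f x / (classCard f x + 1) := by
  unfold orderStatMeanReinsert
  set p := lastOfClass f i
  have hfp : f p = f i := apply_lastOfClass f i
  have hp : ∀ j, f j = f p → j ≤ p := fun j hj => le_lastOfClass (hj.trans hfp)
  obtain hx | ⟨y, rfl⟩ := p.eq_self_or_eq_succAbove x
  · subst hx
    have hcard : (classCard f p : ℝ) ≠ 0 := by exact_mod_cast (classCard_pos f p).ne'
    rw [Fin.insertNth_apply_same, if_pos hfp.symm, classRank_eq_classCard hp, mul_div_assoc,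
      div_self hcard, mul_one]
  · rw [Fin.insertNth_apply_succAbove, orderStatMean, classRank_comp_succAbove hp,
      ← classCard_comp_succAbove f p y, hfp]
    split_ifs <;> push_cast <;> ring

theorem orderStatMean_eq_sum (f : Fin (n + 1) → β) :
    orderStatMean f = ∑ i, ((n : ℝ) + 1)⁻¹ • orderStatMeanReinsert f i := by
  ext x
  simp only [Finset.sum_apply, Pi.smul_apply, smul_eq_mul, orderStatMeanReinsert_apply,
    ← Finset.mul_sum, Finset.sum_ite, sum_const, nsmul_eq_mul]
  have hs : (classCard f x : ℝ) ≠ 0 := by exact_mod_cast (classCard_pos f x).ne'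
  have hsplit : (classCard f x : ℝ) + #{i | ¬f i = f x} = n + 1 := by
    exact_mod_cast (card_filter_add_card_filter_not _).trans (card_fin (n + 1))
  rw [orderStatMean, eq_sub_of_add_eq' hsplit]
  unfold classCard at *
  field_simp
  push_cast
  ring

theorem orderStatMean_mem_permsHull : ∀ {n : ℕ} (f : Fin n → β), orderStatMean f ∈ permsHull n
  | 0, f => subset_convexHull ℝ _ ⟨1, Subsingleton.elim _ _⟩
  | n + 1, f => by
    rw [orderStatMean_eq_sum]
    refine (convex_convexHull ℝ _).sum_mem (fun _ _ => by positivity) ?_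
      (fun i _ => insertNth_mem_permsHull _ (orderStatMean_mem_permsHull _))
    rw [sum_const, card_univ, Fintype.card_fin, nsmul_eq_mul]
    push_cast
    exact mul_inv_cancel₀ (by positivity)

theorem orderStatMean_apply_of_class_eq_Ico {f : Fin n → β} {i : Fin n} {a b : ℕ} (hb : b ≤ n)
    (hclass : ∀ j : Fin n, f j = f i ↔ a ≤ (j : ℕ) ∧ (j : ℕ) < b) :
    orderStatMean f i = ((n : ℝ) + 1) * ((i : ℕ) - a + 1 : ℕ) / ((b - a : ℕ) + 1) := by
  have hrank : classRank f i = (i : ℕ) + 1 - a := by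
    rw [classRank, ← card_filter_fin_le_val_lt (a := a) (Nat.succ_le_of_lt i.isLt)]
    congr 1
    ext j
    simp only [mem_filter, mem_univ, true_and, hclass, Fin.le_def]
    have := (hclass i).1 rfl
    omega
  have hcard : classCard f i = b - a := by
    rw [classCard, ← card_filter_fin_le_val_lt hb]
    simp only [hclass]
  have := (hclass i).1 rfl
  rw [orderStatMean, hrank, hcard, Nat.sub_add_comm this.1]

end

theorem stmt_14 (l l' : ℕ) :
    (fun i : Fin (l + l' + 1) =>
        ((l : ℝ) + (l' : ℝ) + 2) *
          (if (i : ℕ) < l then ((i : ℕ) + 1 : ℝ) / ((l : ℝ) + 1)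
           else if (i : ℕ) < l + l' then (((i : ℕ) - l + 1 : ℕ) : ℝ) / ((l' : ℝ) + 1)
           else (1 : ℝ) / 2))
      ∈ permsHull (l + l' + 1) := by
  let block : Fin (l + l' + 1) → ℕ := fun i =>
    if (i : ℕ) < l then 0 else if (i : ℕ) < l + l' then 1 else 2
  convert orderStatMean_mem_permsHull block using 1
  ext i
  have hi := i.isLt
  split_ifs with h₁ h₂
  · rw [orderStatMean_apply_of_class_eq_Ico (a := 0) (b := l) (by omega)
      (fun j => by simp only [block]; split_ifs <;> simp <;> omega)]
    push_cast [Nat.sub_zero]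
    ring
  · rw [orderStatMean_apply_of_class_eq_Ico (a := l) (b := l + l') (by omega)
      (fun j => by simp only [block]; split_ifs <;> simp <;> omega),
      Nat.add_sub_cancel_left]
    push_cast
    ring
  · rw [orderStatMean_apply_of_class_eq_Ico (a := l + l') (b := l + l' + 1) le_rfl
      (fun j => by simp only [block]; split_ifs <;> simp <;> omega),
      show (i : ℕ) = l + l' by omega, Nat.sub_self, Nat.add_sub_cancel_left]
    push_cast
    ring
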